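/- Near the branch point 1, the logarithmic derivative of φ satisfies |φ'(1+εe^{iθ})/φ(1+εe^{iθ})| = O(ε^{−1/2}) as ε → 0⁺: there exist constants C > 0 and ε₀ > 0 such that for all ε ∈ (0,ε₀) and all θ ∈ (−π,π), |φ'(1+εe^{iθ})/φ(1+εe^{iθ})| ≤ C·ε^{−1/2}. -/

import Mathlib

open Filter Topology Polynomial

/-- Argument in `[0, 2π)`. -/
noncomputable def argNN (z : ℂ) : ℝ :=
  if Complex.arg z < 0 then Complex.arg z + 2 * Real.pi else Complex.arg z

/-- Square root with branch cut along the positive real axis: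
`ρ e^{iθ} ↦ ρ^{1/2} e^{iθ/2}` with `θ ∈ [0, 2π)`. -/
noncomputable def csqrt (z : ℂ) : ℂ :=
  ((‖z‖ ^ ((1 : ℝ) / 2) : ℝ) : ℂ) * Complex.exp (Complex.I * (argNN z : ℂ) / 2)

/-- Principal cube root: `ρ e^{iθ} ↦ ρ^{1/3} e^{iθ/3}` with `θ ∈ (−π, π]`. -/
noncomputable def ccbrt (z : ℂ) : ℂ :=
  ((‖z‖ ^ ((1 : ℝ) / 3) : ℝ) : ℂ) * Complex.exp (Complex.I * (Complex.arg z : ℂ) / 3)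

/-- `ω₃ = e^{2πi/3}`. -/
noncomputable def ω₃ : ℂ := Complex.exp (2 * (Real.pi : ℂ) * Complex.I / 3)

/-- The function `φ` from the paper. -/
noncomputable def phi (z : ℂ) : ℂ :=
  (27 / 4) * ((3 * ω₃ / 2) * ccbrt z *
    (ω₃ * ccbrt (-1 + csqrt (1 - z)) + ccbrt (-1 - csqrt (1 - z))) - 1)

/-- The density `w` of the measure `υ_{[0,1]}`. -/
noncomputable def w (x : ℝ) : ℝ :=
  (Real.sqrt 3 / (4 * Real.pi)) *
    (((1 + Real.sqrt (1 - x)) ^ ((1 : ℝ) / 3) + (1 - Real.sqrt (1 - x)) ^ ((1 : ℝ) / 3)) /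
      (x ^ ((2 : ℝ) / 3) * Real.sqrt (1 - x)))

/-!
Where `z - 1` lies in the slit plane, every branch in `phi` is a principal power: with
`s = csqrt (1 - z) = I (z - 1)^{1/2}` one has `Im s > 0`, and the two cube roots of `-1 ± s` are
`e^{±iπ/3}`-rotations of `(1 ∓ s)^{1/3}`. Using `1 + ω₃ + ω₃² = 0` this gives
`phi z = 27/8 - 81/8 · E` with `|E| = O(|z - 1|^{1/2})`, so `|phi| ≥ 1` near `1`. By the chain rule
`phi'` is a bounded term plus a bounded multiple of `s' = (I/2) (z - 1)^{-1/2}`.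
-/

open Complex
open scoped Real

lemma cpow_ofReal_eq_norm_rpow_mul_exp_arg {v : ℂ} (hv : v ≠ 0) (x : ℝ) :
    v ^ (x : ℂ) = ((‖v‖ ^ x : ℝ) : ℂ) * exp (I * arg v * x) := by
  rw [cpow_def_of_ne_zero hv, log, Real.rpow_def_of_pos (norm_pos_iff.2 hv), ofReal_exp,
    ← exp_add]
  push_cast
  ring_nf

lemma ccbrt_eq_cpow (z : ℂ) : ccbrt z = z ^ (1 / 3 : ℂ) := by
  rcases eq_or_ne z 0 with rfl | hz
  · simp [ccbrt]
  · rw [ccbrt, show (1 / 3 : ℂ) = ((1 / 3 : ℝ) : ℂ) by push_cast; rfl,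
      cpow_ofReal_eq_norm_rpow_mul_exp_arg hz]
    push_cast
    ring_nf

lemma argNN_neg {v : ℂ} (hv : v ∈ slitPlane) : argNN (-v) = arg v + π := by
  unfold argNN
  rcases lt_or_ge 0 v.im with him | him
  · rw [if_pos (arg_neg_iff.2 (by simpa using him)), arg_neg_eq_arg_sub_pi_of_im_pos him]
    ring
  · rw [if_neg (not_lt.2 (arg_nonneg_iff.2 (by simpa using him)))]
    refine arg_neg_eq_arg_add_pi_iff.2 ?_
    rcases him.lt_or_eq with h | h
    · exact Or.inl h
    · exact Or.inr ⟨h, (mem_slitPlane_iff.1 hv).resolve_right (not_not.2 h)⟩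

lemma csqrt_neg {v : ℂ} (hv : v ∈ slitPlane) : csqrt (-v) = I * v ^ (1 / 2 : ℂ) := by
  rw [csqrt, norm_neg, argNN_neg hv, show (1 / 2 : ℂ) = ((1 / 2 : ℝ) : ℂ) by push_cast; rfl,
    cpow_ofReal_eq_norm_rpow_mul_exp_arg (slitPlane_ne_zero hv),
    show I * ((arg v + π : ℝ) : ℂ) / 2 = π / 2 * I + I * arg v * ((1 / 2 : ℝ) : ℂ) by
      push_cast; ring,
    exp_add, exp_pi_div_two_mul_I]
  ring

lemma neg_cpow_of_im_neg {w : ℂ} (hw : w.im < 0) (x : ℂ) :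
    (-w) ^ x = exp (π * I * x) * w ^ x := by
  have hw0 : w ≠ 0 := fun h ↦ by simp [h] at hw
  rw [cpow_def_of_ne_zero (neg_ne_zero.2 hw0), cpow_def_of_ne_zero hw0, log, log, norm_neg,
    arg_neg_eq_arg_add_pi_of_im_neg hw, ← exp_add]
  push_cast
  ring_nf

lemma neg_cpow_of_im_pos {w : ℂ} (hw : 0 < w.im) (x : ℂ) :
    (-w) ^ x = exp (-(π * I * x)) * w ^ x := by
  have hw0 : w ≠ 0 := fun h ↦ by simp [h] at hw
  rw [cpow_def_of_ne_zero (neg_ne_zero.2 hw0), cpow_def_of_ne_zero hw0, log, log, norm_neg,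
    arg_neg_eq_arg_sub_pi_of_im_pos hw, ← exp_add]
  push_cast
  ring_nf

lemma isPrimitiveRoot_ω₃ : IsPrimitiveRoot ω₃ 3 := by
  rw [ω₃]
  exact_mod_cast isPrimitiveRoot_exp 3 (by norm_num)

lemma norm_ω₃ : ‖ω₃‖ = 1 :=
  isPrimitiveRoot_ω₃.norm'_eq_one (by norm_num)

lemma ω₃_sq_add_ω₃_add_one : ω₃ ^ 2 + ω₃ + 1 = 0 := by
  have h := isPrimitiveRoot_ω₃.geom_sum_eq_zero (by norm_num)
  simp only [Finset.sum_range_succ, Finset.sum_range_zero] at h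
  linear_combination h

noncomputable def phiBracket (s : ℂ) : ℂ := ω₃ * (-1 + s) ^ (1 / 3 : ℂ) + (-1 - s) ^ (1 / 3 : ℂ)

noncomputable def phiBracketDeriv (s : ℂ) : ℂ :=
  1 / 3 * (ω₃ * (-1 + s) ^ (-2 / 3 : ℂ) - (-1 - s) ^ (-2 / 3 : ℂ))

lemma phi_eq_phiBracket {z : ℂ} (hz : z - 1 ∈ slitPlane) :
    phi z = 27 / 4 * (3 * ω₃ / 2 * z ^ (1 / 3 : ℂ) *
      phiBracket (I * (z - 1) ^ (1 / 2 : ℂ)) - 1) := by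
  rw [phi, phiBracket, show 1 - z = -(z - 1) by ring, csqrt_neg hz, ccbrt_eq_cpow,
    ccbrt_eq_cpow, ccbrt_eq_cpow]

lemma phiBracket_eq_of_im_pos {s : ℂ} (hs : 0 < s.im) :
    phiBracket s = -((1 - s) ^ (1 / 3 : ℂ) + ω₃ * (1 + s) ^ (1 / 3 : ℂ)) := by
  have hrot : ω₃ * exp (π * I * (1 / 3)) = -1 := by
    rw [ω₃, ← exp_add, ← exp_pi_mul_I]
    ring_nf
  have hrot' : exp (-(π * I * (1 / 3))) = -ω₃ := by
    have h : exp (-(π * I * (1 / 3))) * exp (π * I) = ω₃ := by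
      rw [ω₃, ← exp_add]
      ring_nf
    rw [exp_pi_mul_I] at h
    linear_combination -h
  rw [phiBracket, show -1 + s = -(1 - s) by ring, show -1 - s = -(1 + s) by ring,
    neg_cpow_of_im_neg (by simpa using hs), neg_cpow_of_im_pos (by simpa using hs), hrot']
  linear_combination (1 - s) ^ (1 / 3 : ℂ) * hrot

lemma hasDerivAt_phiBracket {s : ℂ} (hs : s.im ≠ 0) :
    HasDerivAt phiBracket (phiBracketDeriv s) s := by
  have hplus : HasDerivAt (fun t ↦ (-1 + t) ^ (1 / 3 : ℂ))
      (1 / 3 * (-1 + s) ^ (1 / 3 - 1 : ℂ) * 1) s :=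
    ((hasDerivAt_id s).const_add (-1)).cpow_const (mem_slitPlane_iff.2 (Or.inr (by simpa)))
  have hminus : HasDerivAt (fun t ↦ (-1 - t) ^ (1 / 3 : ℂ))
      (1 / 3 * (-1 - s) ^ (1 / 3 - 1 : ℂ) * -1) s :=
    ((hasDerivAt_id s).const_sub (-1)).cpow_const (mem_slitPlane_iff.2 (Or.inr (by simpa)))
  refine ((hplus.const_mul ω₃).add hminus).congr_deriv ?_
  rw [phiBracketDeriv, show (1 / 3 - 1 : ℂ) = -2 / 3 by norm_num]
  ring

lemma norm_one_add_cpow_one_third_sub_one_le {w : ℂ} (hw : ‖w‖ ≤ 1 / 2) :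
    ‖(1 + w) ^ (1 / 3 : ℂ) - 1‖ ≤ ‖w‖ := by
  have hw0 : 1 + w ≠ 0 := fun h ↦ by
    rw [show w = -1 by linear_combination h, norm_neg, norm_one] at hw
    norm_num at hw
  have hlog : ‖log (1 + w) * (1 / 3)‖ ≤ 1 / 2 * ‖w‖ := by
    rw [norm_mul, show ‖(1 / 3 : ℂ)‖ = 1 / 3 by norm_num]
    linarith [norm_log_one_add_half_le_self hw]
  rw [cpow_def_of_ne_zero hw0]
  linarith [norm_exp_sub_one_le (hlog.trans (by linarith))]

lemma norm_cpow_le_two {w c : ℂ} {x : ℝ} (hc : ‖c‖ = 1) (hw : ‖w - c‖ ≤ 1 / 2)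
    (hx : |x| ≤ 1) : ‖w ^ (x : ℂ)‖ ≤ 2 := by
  have hlow : 1 / 2 ≤ ‖w‖ := by linarith [norm_sub_norm_le c w, norm_sub_rev w c]
  have hup : ‖w‖ ≤ 3 / 2 := by linarith [norm_sub_norm_le w c]
  rw [norm_cpow_real]
  rcases le_total 1 ‖w‖ with h1 | h1
  · calc ‖w‖ ^ x ≤ ‖w‖ ^ (1 : ℝ) := Real.rpow_le_rpow_of_exponent_le h1 (abs_le.1 hx).2
      _ ≤ 2 := by rw [Real.rpow_one]; linarith
  · calc ‖w‖ ^ x ≤ ‖w‖ ^ (-1 : ℝ) :=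
          Real.rpow_le_rpow_of_exponent_ge (by linarith) h1 (abs_le.1 hx).1
      _ ≤ 2 := by
          rw [Real.rpow_neg_one]
          exact inv_le_of_inv_le₀ (by norm_num) (by linarith)

lemma norm_phiBracket_le {s : ℂ} (hs : ‖s‖ ≤ 1 / 2) : ‖phiBracket s‖ ≤ 4 := by
  have hplus := norm_cpow_le_two (w := -1 + s) (c := -1) (x := 1 / 3) (by simp)
    (by rwa [sub_neg_eq_add, neg_add_cancel_comm]) (by norm_num [abs_of_pos])
  have hminus := norm_cpow_le_two (w := -1 - s) (c := -1) (x := 1 / 3) (by simp)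
    (by rwa [sub_sub_cancel_left, norm_neg]) (by norm_num [abs_of_pos])
  push_cast at hplus hminus
  calc ‖phiBracket s‖ ≤ ‖ω₃‖ * ‖(-1 + s) ^ (1 / 3 : ℂ)‖ + ‖(-1 - s) ^ (1 / 3 : ℂ)‖ :=
        (norm_add_le _ _).trans_eq (by rw [norm_mul])
    _ ≤ 4 := by rw [norm_ω₃]; linarith

lemma norm_phiBracketDeriv_le {s : ℂ} (hs : ‖s‖ ≤ 1 / 2) : ‖phiBracketDeriv s‖ ≤ 4 / 3 := by
  have hplus := norm_cpow_le_two (w := -1 + s) (c := -1) (x := -2 / 3) (by simp)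
    (by rwa [sub_neg_eq_add, neg_add_cancel_comm]) (by norm_num [abs_of_neg])
  have hminus := norm_cpow_le_two (w := -1 - s) (c := -1) (x := -2 / 3) (by simp)
    (by rwa [sub_sub_cancel_left, norm_neg]) (by norm_num [abs_of_neg])
  push_cast at hplus hminus
  calc ‖phiBracketDeriv s‖
      ≤ 1 / 3 * (‖ω₃‖ * ‖(-1 + s) ^ (-2 / 3 : ℂ)‖ + ‖(-1 - s) ^ (-2 / 3 : ℂ)‖) := by
        rw [phiBracketDeriv, norm_mul, show ‖(1 / 3 : ℂ)‖ = 1 / 3 by norm_num]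
        gcongr
        exact (norm_sub_le _ _).trans_eq (by rw [norm_mul])
    _ ≤ 4 / 3 := by rw [norm_ω₃]; linarith

lemma mem_slitPlane_of_sub_one_mem {z : ℂ} (hz : z - 1 ∈ slitPlane) : z ∈ slitPlane := by
  rw [mem_slitPlane_iff] at hz ⊢
  rcases hz with h | h
  · left
    simp only [sub_re, one_re] at h
    linarith
  · right
    simpa using h

lemma re_cpow_one_half_pos {u : ℂ} (hu : u ∈ slitPlane) : 0 < (u ^ (1 / 2 : ℂ)).re := by
  have him : (log u * (1 / 2)).im = arg u / 2 := by simp [log_im, div_eq_mul_inv]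
  have harg := (arg_le_pi u).lt_of_ne (slitPlane_arg_ne_pi hu)
  rw [cpow_def_of_ne_zero (slitPlane_ne_zero hu), exp_re, him]
  exact mul_pos (Real.exp_pos _)
    (Real.cos_pos_of_mem_Ioo ⟨by linarith [neg_pi_lt_arg u], by linarith⟩)

lemma norm_I_mul_cpow_one_half_le {u : ℂ} (hu : ‖u‖ ≤ 1 / 1600) :
    ‖I * u ^ (1 / 2 : ℂ)‖ ≤ 1 / 40 := by
  rw [norm_mul, norm_I, one_mul, show (1 / 2 : ℂ) = ((1 / 2 : ℝ) : ℂ) by push_cast; rfl,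
    norm_cpow_real, ← Real.sqrt_eq_rpow, Real.sqrt_le_left (by norm_num)]
  linarith

lemma hasDerivAt_phi {z : ℂ} (hz : z - 1 ∈ slitPlane) :
    HasDerivAt phi (27 / 4 * (3 * ω₃ / 2) *
      (1 / 3 * z ^ (-2 / 3 : ℂ) * phiBracket (I * (z - 1) ^ (1 / 2 : ℂ)) +
        z ^ (1 / 3 : ℂ) * (phiBracketDeriv (I * (z - 1) ^ (1 / 2 : ℂ)) *
          (I / 2 * (z - 1) ^ (-1 / 2 : ℂ))))) z := by
  have hphi : phi =ᶠ[𝓝 z] fun z ↦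
      27 / 4 * (3 * ω₃ / 2 * z ^ (1 / 3 : ℂ) * phiBracket (I * (z - 1) ^ (1 / 2 : ℂ)) - 1) :=
    Filter.eventually_of_mem ((isOpen_slitPlane.preimage (continuous_sub_right 1)).mem_nhds hz)
      fun _ ↦ phi_eq_phiBracket
  have hsqrt : HasDerivAt (fun z ↦ I * (z - 1) ^ (1 / 2 : ℂ))
      (I * (1 / 2 * (z - 1) ^ (1 / 2 - 1 : ℂ) * 1)) z :=
    (((hasDerivAt_id z).sub_const 1).cpow_const hz).const_mul I
  have hbracket := (hasDerivAt_phiBracket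
    (by simpa using (re_cpow_one_half_pos hz).ne')).comp z hsqrt
  have hcbrt := (hasDerivAt_id z).cpow_const (c := 1 / 3) (mem_slitPlane_of_sub_one_mem hz)
  refine ((((hcbrt.const_mul (3 * ω₃ / 2)).mul hbracket).sub_const 1).const_mul (27 / 4)
    |>.congr_of_eventuallyEq hphi |>.congr_deriv ?_)
  rw [show (1 / 3 - 1 : ℂ) = -2 / 3 by norm_num, show (1 / 2 - 1 : ℂ) = -1 / 2 by norm_num]
  simp only [id, Function.comp_apply]
  ring

lemma phi_eq_27_div_8_sub {z : ℂ} (hz : z - 1 ∈ slitPlane) :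
    let s := I * (z - 1) ^ (1 / 2 : ℂ)
    let a := z ^ (1 / 3 : ℂ)
    phi z = 27 / 8 - 81 / 8 * (a * ω₃ * ((1 - s) ^ (1 / 3 : ℂ) - 1) +
      a * ω₃ ^ 2 * ((1 + s) ^ (1 / 3 : ℂ) - 1) - (a - 1)) := by
  intro s a
  rw [phi_eq_phiBracket hz, phiBracket_eq_of_im_pos (by simpa [s] using re_cpow_one_half_pos hz)]
  linear_combination (-81 / 8 * a) * ω₃_sq_add_ω₃_add_one

lemma one_le_norm_phi {z : ℂ} (hz : z - 1 ∈ slitPlane) (hε : ‖z - 1‖ ≤ 1 / 1600) :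
    1 ≤ ‖phi z‖ := by
  set s := I * (z - 1) ^ (1 / 2 : ℂ)
  set a := z ^ (1 / 3 : ℂ)
  have hs : ‖s‖ ≤ 1 / 40 := norm_I_mul_cpow_one_half_le hε
  have ha : ‖a - 1‖ ≤ 1 / 1600 := by
    have h := norm_one_add_cpow_one_third_sub_one_le (w := z - 1) (by linarith)
    rw [add_sub_cancel] at h
    exact h.trans hε
  have hp : ‖(1 - s) ^ (1 / 3 : ℂ) - 1‖ ≤ 1 / 40 := by
    have h := norm_one_add_cpow_one_third_sub_one_le (w := -s) (by rw [norm_neg]; linarith)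
    rw [← sub_eq_add_neg, norm_neg] at h
    exact h.trans hs
  have hq : ‖(1 + s) ^ (1 / 3 : ℂ) - 1‖ ≤ 1 / 40 :=
    (norm_one_add_cpow_one_third_sub_one_le (by linarith)).trans hs
  have ha' : ‖a‖ ≤ 2 := by linarith [norm_le_norm_sub_add a 1, norm_one (α := ℂ)]
  have hdev : ‖a * ω₃ * ((1 - s) ^ (1 / 3 : ℂ) - 1) + a * ω₃ ^ 2 * ((1 + s) ^ (1 / 3 : ℂ) - 1) -
      (a - 1)‖ ≤ 2 * (1 / 40) + 2 * (1 / 40) + 1 / 1600 := by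
    refine (norm_sub_le _ _).trans (add_le_add ((norm_add_le _ _).trans (add_le_add ?_ ?_)) ha)
    · rw [norm_mul, norm_mul, norm_ω₃, mul_one]
      exact mul_le_mul ha' hp (norm_nonneg _) (by norm_num)
    · rw [norm_mul, norm_mul, norm_pow, norm_ω₃, one_pow, mul_one]
      exact mul_le_mul ha' hq (norm_nonneg _) (by norm_num)
  rw [phi_eq_27_div_8_sub hz]
  have := norm_sub_norm_le (27 / 8 : ℂ) (81 / 8 * (a * ω₃ * ((1 - s) ^ (1 / 3 : ℂ) - 1) +
      a * ω₃ ^ 2 * ((1 + s) ^ (1 / 3 : ℂ) - 1) - (a - 1)))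
  rw [norm_mul] at this
  norm_num at this ⊢
  linarith

lemma norm_deriv_phi_le {z : ℂ} (hz : z - 1 ∈ slitPlane) (hε : ‖z - 1‖ ≤ 1 / 1600) :
    ‖deriv phi z‖ ≤ 41 * ‖z - 1‖ ^ (-1 / 2 : ℝ) := by
  set s := I * (z - 1) ^ (1 / 2 : ℂ)
  set R := ‖z - 1‖ ^ (-1 / 2 : ℝ)
  have hR : 1 ≤ R := Real.one_le_rpow_of_pos_of_le_one_of_nonpos
    (norm_pos_iff.2 (slitPlane_ne_zero hz)) (by linarith) (by norm_num)
  have hs : ‖s‖ ≤ 1 / 2 := (norm_I_mul_cpow_one_half_le hε).trans (by norm_num)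
  have hcbrt := norm_cpow_le_two (w := z) (c := 1) (x := 1 / 3) norm_one (by linarith)
    (by norm_num [abs_of_pos])
  have hcbrt' := norm_cpow_le_two (w := z) (c := 1) (x := -2 / 3) norm_one (by linarith)
    (by norm_num [abs_of_neg])
  push_cast at hcbrt hcbrt'
  have hsqrt : ‖(z - 1) ^ (-1 / 2 : ℂ)‖ = R := by
    rw [show (-1 / 2 : ℂ) = ((-1 / 2 : ℝ) : ℂ) by push_cast; rfl, norm_cpow_real]
  have hconst : ‖(27 / 4 : ℂ) * (3 * ω₃ / 2)‖ = 27 / 4 * (3 / 2) := by simp [norm_ω₃]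
  rw [(hasDerivAt_phi hz).deriv]
  calc _ ≤ 27 / 4 * (3 / 2) * (1 / 3 * 2 * 4 + 2 * (4 / 3 * (1 / 2 * R))) := by
        rw [norm_mul, hconst]
        gcongr
        refine (norm_add_le _ _).trans (add_le_add ?_ ?_)
        · rw [norm_mul, norm_mul]
          gcongr
          · norm_num
          · exact norm_phiBracket_le hs
        · rw [norm_mul, norm_mul, norm_mul, norm_div, norm_I, hsqrt]
          gcongr
          · exact norm_phiBracketDeriv_le hs
          · norm_num
    _ ≤ 41 * R := by linarith

/-- near the branch point `1`, `|phi'/phi|` is `O(ε^(-1/2))`. -/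
theorem phi_logderiv_near_one :
    ∃ C > (0 : ℝ), ∃ ε₀ > (0 : ℝ), ∀ ε : ℝ, ε ∈ Set.Ioo 0 ε₀ →
      ∀ θ ∈ Set.Ioo (-Real.pi) Real.pi,
        ‖deriv phi (1 + (ε : ℂ) * Complex.exp (Complex.I * (θ : ℂ))) /
            phi (1 + (ε : ℂ) * Complex.exp (Complex.I * (θ : ℂ)))‖
          ≤ C * ε ^ (-(1 : ℝ) / 2) := by
  refine ⟨41, by norm_num, 1 / 1600, by norm_num, ?_⟩
  rintro ε ⟨hε0, hε⟩ θ ⟨hθ0, hθ⟩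
  set u := (ε : ℂ) * exp (I * θ) with hu_def
  have hu_norm : ‖u‖ = ε := by
    rw [norm_mul, norm_exp_I_mul_ofReal, mul_one, norm_real, Real.norm_of_nonneg hε0.le]
  have hu_arg : arg u = θ := by
    rw [hu_def, mul_comm I, exp_mul_I, arg_real_mul _ hε0, arg_cos_add_sin_mul_I ⟨hθ0, hθ.le⟩]
  have hu : (1 + u) - 1 ∈ slitPlane := by
    rw [add_sub_cancel_left, mem_slitPlane_iff_arg, hu_arg]
    exact ⟨hθ.ne, norm_ne_zero_iff.1 (hu_norm ▸ hε0.ne')⟩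
  have hu_small : ‖(1 + u) - 1‖ ≤ 1 / 1600 := by
    rw [add_sub_cancel_left, hu_norm]
    exact hε.le
  calc ‖deriv phi (1 + u) / phi (1 + u)‖ ≤ ‖deriv phi (1 + u)‖ := by
        rw [norm_div]
        exact div_le_self (norm_nonneg _) (one_le_norm_phi hu hu_small)
    _ ≤ 41 * ε ^ (-(1 : ℝ) / 2) := by
        simpa [hu_norm] using norm_deriv_phi_le hu hu_small
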